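/- Fix ε > 0 and m ≥ 0. For all (x,t) in εℤ² with t > 0: a1(x, t+ε, m, ε) = (1/√(1+m²ε²))·(a1(x+ε, t, m, ε) + mε·a2(x+ε, t, m, ε)) and a2(x, t+ε, m, ε) = (1/√(1+m²ε²))·(a2(x−ε, t, m, ε) − mε·a1(x−ε, t, m, ε)). -/

import Mathlib

open scoped BigOperators

noncomputable section

/-- Endpoint `x`-coordinate of a checker path of `n` steps encoded by step directions:
`true` = step `(1,1)`, `false` = step `(-1,1)`. -/
def endpt {n : ℕ} (d : Fin n → Bool) : ℤ :=
  ∑ i, (if d i then (1 : ℤ) else -1)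

/-- The number of turns of a checker path encoded by step directions. -/
def turns {n : ℕ} (d : Fin n → Bool) : ℕ :=
  ((Finset.range n).filter fun i =>
    ∃ h : i + 1 < n, d ⟨i, Nat.lt_of_succ_lt h⟩ ≠ d ⟨i + 1, h⟩).card

/-- Checker paths from `(0,0)` to `(x,n)` with the first step to `(1,1)`,
encoded by their step directions. -/
def pathsTo (x : ℤ) (n : ℕ) : Finset (Fin n → Bool) :=
  Finset.univ.filter fun d => (∃ h : 0 < n, d ⟨0, h⟩ = true) ∧ endpt d = x

/-- Feynman checkers with mass `m` and lattice step `ε`: the value `a(εx, εt, m, ε)`,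
where `x t : ℤ` are the coordinates in units of `ε`. -/
def am (x t : ℤ) (m ε : ℝ) : ℂ :=
  (1 + m ^ 2 * ε ^ 2 : ℂ) ^ ((1 - (t : ℂ)) / 2) * Complex.I *
    ∑ d ∈ pathsTo x t.toNat, (-Complex.I * (m * ε)) ^ turns d

/-- The basic model: `a(x,t)`. -/
def a (x t : ℤ) : ℂ :=
  (2 : ℂ) ^ ((1 - (t : ℂ)) / 2) * Complex.I *
    ∑ d ∈ pathsTo x t.toNat, (-Complex.I) ^ turns d

/-
Write `S(x, n) = ∑ z ^ turns s` over the paths to `(x, n)`, with `z = -i m ε`. Appending a step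
to a path adds `0` or `1` turns, and since every path starts to the right, its number of turns is
even exactly when it ends to the right. As `z` is purely imaginary, `z ^ k` is real for even `k`
and imaginary for odd `k`, so `Re S(x, n + 1)` only sees the paths ending to the right, whose
weights are those of `(1 + z) S(x - 1, n)`; likewise `Im S(x, n + 1) = Im ((1 + z) S(x + 1, n))`.
The prefactor `(1 + m²ε²) ^ ((1 - t) / 2)` shrinks by `√(1 + m²ε²)` per time step.
-/

lemma turns_eq_sum {n : ℕ} (d : Fin (n + 1) → Bool) :
    turns d = ∑ i : Fin n, if d i.castSucc ≠ d i.succ then 1 else 0 := by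
  rw [turns, Finset.card_filter, Finset.sum_range_succ, Finset.sum_range]
  simp only [lt_irrefl, IsEmpty.exists_iff, if_false, add_zero]
  refine Finset.sum_congr rfl fun i _ => ?_
  simp only [Nat.add_lt_add_iff_right, i.isLt, exists_true_left]
  rfl

lemma turns_snoc {n : ℕ} (d : Fin (n + 1) → Bool) (b : Bool) :
    turns (Fin.snoc d b : Fin (n + 2) → Bool) =
      turns d + if d (Fin.last n) = b then 0 else 1 := by
  rw [turns_eq_sum, turns_eq_sum, Fin.sum_univ_castSucc]
  simp only [Fin.succ_castSucc, Fin.snoc_castSucc, Fin.succ_last, Fin.snoc_last]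
  simp

lemma even_turns_iff {n : ℕ} (d : Fin (n + 1) → Bool) :
    Even (turns d) ↔ d 0 = d (Fin.last n) := by
  induction n with
  | zero => simp [turns_eq_sum]
  | succ n ih =>
    refine Fin.snocCases (fun d b => ?_) d
    rw [turns_snoc, Fin.snoc_apply_zero, Fin.snoc_last]
    have := ih d
    revert this
    cases d 0 <;> cases d (Fin.last n) <;> cases b <;> simp [Nat.even_add_one]

lemma endpt_snoc {n : ℕ} (d : Fin n → Bool) (b : Bool) :
    endpt (Fin.snoc d b : Fin (n + 1) → Bool) = endpt d + if b then 1 else -1 := by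
  simp [endpt, Fin.sum_univ_castSucc]

lemma snoc_mem_pathsTo {x : ℤ} {n : ℕ} {d : Fin (n + 1) → Bool} {b : Bool} :
    (Fin.snoc d b : Fin (n + 2) → Bool) ∈ pathsTo x (n + 2) ↔
      d ∈ pathsTo (x - if b then 1 else -1) (n + 1) := by
  have h0 : (Fin.snoc d b : Fin (n + 2) → Bool) ⟨0, by omega⟩ = d ⟨0, by omega⟩ :=
    Fin.snoc_castSucc (α := fun _ => Bool) b d 0
  simp only [pathsTo, Finset.mem_filter, Finset.mem_univ, true_and, endpt_snoc,
    Nat.succ_pos, exists_true_left, h0, eq_sub_iff_add_eq]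

lemma sum_pathsTo_succ {M : Type*} [AddCommMonoid M] (x : ℤ) (n : ℕ)
    (f : (Fin (n + 2) → Bool) → M) :
    ∑ d ∈ pathsTo x (n + 2), f d =
      ∑ d ∈ pathsTo (x - 1) (n + 1), f (Fin.snoc d true) +
        ∑ d ∈ pathsTo (x + 1) (n + 1), f (Fin.snoc d false) := by
  classical
  have hsnoc : ∀ p : Bool × (Fin (n + 1) → Bool),
      (Fin.snocEquiv fun _ => Bool) p = Fin.snoc p.2 p.1 := fun _ => rfl
  rw [← Finset.univ_inter (pathsTo x (n + 2)), ← Finset.sum_ite_mem,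
    ← (Fin.snocEquiv fun _ => Bool).sum_comp, Fintype.sum_prod_type, Fintype.sum_bool]
  simp only [hsnoc, snoc_mem_pathsTo, Finset.sum_ite_mem, Finset.univ_inter]
  norm_num

lemma turns_snoc_eq_or {n : ℕ} (d : Fin (n + 1) → Bool) (b : Bool) :
    turns (Fin.snoc d b : Fin (n + 2) → Bool) = turns d ∨
      turns (Fin.snoc d b : Fin (n + 2) → Bool) = turns d + 1 := by
  rw [turns_snoc]
  split_ifs <;> simp

lemma even_turns_snoc_iff {x : ℤ} {n : ℕ} {d : Fin (n + 1) → Bool}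
    (hd : d ∈ pathsTo x (n + 1)) (b : Bool) :
    Even (turns (Fin.snoc d b : Fin (n + 2) → Bool)) ↔ b = true := by
  have h0 : d 0 = true := by
    simp only [pathsTo, Finset.mem_filter] at hd
    exact hd.2.1.2
  rw [even_turns_iff, Fin.snoc_apply_zero, Fin.snoc_last, h0, eq_comm]

namespace Complex

variable {w : ℂ}

lemma sq_eq_ofReal_of_re_eq_zero (hw : w.re = 0) : w ^ 2 = ((-w.im ^ 2 : ℝ) : ℂ) := by
  apply Complex.ext <;> simp [sq, hw]

lemma im_pow_of_re_eq_zero_of_even (hw : w.re = 0) {k : ℕ} (hk : Even k) : (w ^ k).im = 0 := by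
  obtain ⟨j, rfl⟩ := hk
  rw [← two_mul, pow_mul, sq_eq_ofReal_of_re_eq_zero hw, ← ofReal_pow, ofReal_im]

lemma re_pow_of_re_eq_zero_of_odd (hw : w.re = 0) {k : ℕ} (hk : Odd k) : (w ^ k).re = 0 := by
  obtain ⟨j, rfl⟩ := hk
  rw [pow_succ, pow_mul, sq_eq_ofReal_of_re_eq_zero hw, ← ofReal_pow, re_ofReal_mul, hw, mul_zero]

lemma re_pow_eq_re_one_add_mul_pow (hw : w.re = 0) {j k : ℕ} (hj : Even j)
    (hjk : j = k ∨ j = k + 1) : (w ^ j).re = ((1 + w) * w ^ k).re := by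
  rw [add_mul, one_mul, ← pow_succ', add_re]
  rcases hjk with rfl | rfl
  · rw [re_pow_of_re_eq_zero_of_odd hw hj.add_one, add_zero]
  · rw [re_pow_of_re_eq_zero_of_odd hw (Nat.not_even_iff_odd.mp (Nat.even_add_one.mp hj)),
      zero_add]

lemma im_pow_eq_im_one_add_mul_pow (hw : w.re = 0) {j k : ℕ} (hj : Odd j)
    (hjk : j = k ∨ j = k + 1) : (w ^ j).im = ((1 + w) * w ^ k).im := by
  rw [add_mul, one_mul, ← pow_succ', add_im]
  rcases hjk with rfl | rfl
  · rw [im_pow_of_re_eq_zero_of_even hw hj.add_one, add_zero]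
  · rw [im_pow_of_re_eq_zero_of_even hw (Nat.not_odd_iff_even.mp (Nat.odd_add_one.mp hj)),
      zero_add]

end Complex

open Complex

def pathSum (z : ℂ) (x : ℤ) (n : ℕ) : ℂ :=
  ∑ d ∈ pathsTo x n, z ^ turns d

lemma re_pathSum_add_two {w : ℂ} (hw : w.re = 0) (x : ℤ) (n : ℕ) :
    (pathSum w x (n + 2)).re = ((1 + w) * pathSum w (x - 1) (n + 1)).re := by
  rw [pathSum, sum_pathsTo_succ, add_re, re_sum, re_sum, pathSum, Finset.mul_sum, re_sum,
    Finset.sum_eq_zero (s := pathsTo (x + 1) (n + 1)) fun d hd => re_pow_of_re_eq_zero_of_odd hw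
      (Nat.not_even_iff_odd.mp (by simp [even_turns_snoc_iff hd])), add_zero]
  exact Finset.sum_congr rfl fun d hd => re_pow_eq_re_one_add_mul_pow hw
    ((even_turns_snoc_iff hd true).2 rfl) (turns_snoc_eq_or d true)

lemma im_pathSum_add_two {w : ℂ} (hw : w.re = 0) (x : ℤ) (n : ℕ) :
    (pathSum w x (n + 2)).im = ((1 + w) * pathSum w (x + 1) (n + 1)).im := by
  rw [pathSum, sum_pathsTo_succ, add_im, im_sum, im_sum, pathSum, Finset.mul_sum, im_sum,
    Finset.sum_eq_zero (s := pathsTo (x - 1) (n + 1)) fun d hd => im_pow_of_re_eq_zero_of_even hw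
      ((even_turns_snoc_iff hd true).2 rfl), zero_add]
  exact Finset.sum_congr rfl fun d hd => im_pow_eq_im_one_add_mul_pow hw
    (Nat.not_even_iff_odd.mp (by simp [even_turns_snoc_iff hd])) (turns_snoc_eq_or d false)

lemma am_eq_ofReal_mul_pathSum (x t : ℤ) (m ε : ℝ) :
    am x t m ε = ((1 + m ^ 2 * ε ^ 2) ^ ((1 - t : ℝ) / 2) : ℝ) *
      (I * pathSum (-I * (m * ε)) x t.toNat) := by
  rw [am, pathSum, ofReal_cpow (by positivity)]
  push_cast
  ring

theorem dirac_equation_mass_general (m ε : ℝ) (x t : ℤ) (ht : 0 < t) :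
    (am x (t + 1) m ε).re = (1 / Real.sqrt (1 + m ^ 2 * ε ^ 2)) *
      ((am (x + 1) t m ε).re + m * ε * (am (x + 1) t m ε).im) ∧
    (am x (t + 1) m ε).im = (1 / Real.sqrt (1 + m ^ 2 * ε ^ 2)) *
      ((am (x - 1) t m ε).im - m * ε * (am (x - 1) t m ε).re) := by
  obtain ⟨n, rfl⟩ : ∃ n : ℕ, t = n + 1 := ⟨t.toNat - 1, by omega⟩
  have hw : (-I * (m * ε)).re = 0 := by simp
  have hC : (0 : ℝ) < 1 + m ^ 2 * ε ^ 2 := by positivity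
  have hpow : (1 + m ^ 2 * ε ^ 2) ^ ((1 - ((n + 1 + 1 : ℤ) : ℝ)) / 2) =
      (1 + m ^ 2 * ε ^ 2) ^ ((1 - ((n + 1 : ℤ) : ℝ)) / 2) / √(1 + m ^ 2 * ε ^ 2) := by
    rw [Real.sqrt_eq_rpow, ← Real.rpow_sub hC]
    push_cast
    ring_nf
  simp only [am_eq_ofReal_mul_pathSum, hpow, re_ofReal_mul, im_ofReal_mul, I_mul_re, I_mul_im,
    show ((n : ℤ) + 1 + 1).toNat = n + 2 by omega, show ((n : ℤ) + 1).toNat = n + 1 by omega,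
    re_pathSum_add_two hw, im_pathSum_add_two hw]
  constructor <;> simp [mul_re, mul_im] <;> ring

/-- Dirac equation for Feynman checkers with mass m and lattice step ε. -/
theorem dirac_equation_mass (m ε : ℝ) (hε : 0 < ε) (hm : 0 ≤ m) (x t : ℤ) (ht : 0 < t) :
    (am x (t + 1) m ε).re = (1 / Real.sqrt (1 + m ^ 2 * ε ^ 2)) *
      ((am (x + 1) t m ε).re + m * ε * (am (x + 1) t m ε).im) ∧
    (am x (t + 1) m ε).im = (1 / Real.sqrt (1 + m ^ 2 * ε ^ 2)) *
      ((am (x - 1) t m ε).im - m * ε * (am (x - 1) t m ε).re) :=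
  dirac_equation_mass_general m ε x t ht
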